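/- (Hardy's inequality in ℝ³) For every u in the Schwartz space (or in H¹(ℝ³)), ‖ |x|^{-1} u ‖_{L²(ℝ³)} ≤ 2 ‖∇u‖_{L²(ℝ³)}. -/

import Mathlib

/-!
For `x ≠ 0`, integrating the derivative of `u` along the ray `t ↦ t • x` from `t = 1` to `∞`
gives `‖u x‖ / ‖x‖ ≤ ∫₁^∞ ‖Du(t x)‖ dt`. Cauchy–Schwarz against the weight `t ^ p` bounds the
square of this by `(p - 1)⁻¹ ∫₁^∞ t ^ p ‖Du(t x)‖² dt`; integrating in `x` and substituting
`y = t x`, whose Jacobian is `t ^ (-d)`, leaves `((p - 1) (d - 1 - p))⁻¹ ∫ ‖Du‖²`. The choice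
`p = d / 2` minimizes this constant, making it `(2 / (d - 2)) ^ 2`.
-/

open MeasureTheory Set Filter Topology Module
open scoped ENNReal SchwartzMap

theorem enorm_le_setLIntegral_Ioi_enorm_deriv {F : Type*} [NormedAddCommGroup F]
    [NormedSpace ℝ F] [CompleteSpace F] {f f' : ℝ → F} {a : ℝ}
    (hderiv : ∀ t ∈ Ici a, HasDerivAt f (f' t) t)
    (hf' : AEStronglyMeasurable f' (volume.restrict (Ioi a)))
    (hf : Tendsto f atTop (𝓝 0)) :
    ‖f a‖ₑ ≤ ∫⁻ t in Ioi a, ‖f' t‖ₑ := by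
  by_cases hfin : ∫⁻ t in Ioi a, ‖f' t‖ₑ = ∞
  · simp [hfin]
  have hint : IntegrableOn f' (Ioi a) := ⟨hf', lt_top_iff_ne_top.2 hfin⟩
  calc ‖f a‖ₑ = ‖∫ t in Ioi a, f' t‖ₑ := by
        rw [integral_Ioi_of_hasDerivAt_of_tendsto' hderiv hint hf, zero_sub, enorm_neg]
    _ ≤ ∫⁻ t in Ioi a, ‖f' t‖ₑ := enorm_integral_le_lintegral_enorm _

theorem setLIntegral_Ioi_one_ofReal_rpow {a : ℝ} (ha : a < -1) :
    ∫⁻ t in Ioi (1 : ℝ), ENNReal.ofReal (t ^ a) = ENNReal.ofReal (-(a + 1))⁻¹ := by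
  rw [← ofReal_integral_eq_lintegral_ofReal (integrableOn_Ioi_rpow_of_lt ha zero_lt_one),
    integral_Ioi_rpow_of_lt ha zero_lt_one, Real.one_rpow, neg_div, ← neg_inv, one_div]
  filter_upwards [ae_restrict_mem measurableSet_Ioi] with t ht
  exact Real.rpow_nonneg (zero_le_one.trans ht.le) _

theorem ENNReal.sq_lintegral_mul_le {α : Type*} [MeasurableSpace α] (μ : Measure α)
    {f g : α → ℝ≥0∞} (hf : AEMeasurable f μ) (hg : AEMeasurable g μ) :
    (∫⁻ a, f a * g a ∂μ) ^ 2 ≤ (∫⁻ a, f a ^ 2 ∂μ) * ∫⁻ a, g a ^ 2 ∂μ := by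
  have h := ENNReal.lintegral_mul_le_Lp_mul_Lq μ Real.HolderConjugate.two_two hf hg
  simp only [Pi.mul_apply, ENNReal.rpow_two] at h
  calc (∫⁻ a, f a * g a ∂μ) ^ 2
      ≤ ((∫⁻ a, f a ^ 2 ∂μ) ^ (1 / 2 : ℝ) * (∫⁻ a, g a ^ 2 ∂μ) ^ (1 / 2 : ℝ)) ^ 2 := by gcongr
    _ = (∫⁻ a, f a ^ 2 ∂μ) * ∫⁻ a, g a ^ 2 ∂μ := by
      rw [mul_pow, ← ENNReal.rpow_natCast, ← ENNReal.rpow_natCast (_ ^ _), ← ENNReal.rpow_mul,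
        ← ENNReal.rpow_mul]
      norm_num

theorem sq_setLIntegral_Ioi_one_le {g : ℝ → ℝ≥0∞}
    (hg : AEMeasurable g (volume.restrict (Ioi 1))) {p : ℝ} (hp : 1 < p) :
    (∫⁻ t in Ioi (1 : ℝ), g t) ^ 2 ≤
      ENNReal.ofReal (p - 1)⁻¹ * ∫⁻ t in Ioi (1 : ℝ), ENNReal.ofReal (t ^ p) * g t ^ 2 := by
  have hsq {t : ℝ} (ht : t ∈ Ioi 1) (s : ℝ) :
      ENNReal.ofReal (t ^ s) ^ 2 = ENNReal.ofReal (t ^ (2 * s)) := by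
    rw [← ENNReal.ofReal_pow (Real.rpow_nonneg (zero_le_one.trans ht.le) _),
      ← Real.rpow_mul_natCast (zero_le_one.trans ht.le)]
    ring_nf
  have hsplit : ∫⁻ t in Ioi (1 : ℝ), g t =
      ∫⁻ t in Ioi (1 : ℝ),
        ENNReal.ofReal (t ^ (-p / 2)) * (ENNReal.ofReal (t ^ (p / 2)) * g t) := by
    refine setLIntegral_congr_fun measurableSet_Ioi fun t ht => ?_
    have ht0 : 0 < t := zero_lt_one.trans ht
    rw [← mul_assoc, ← ENNReal.ofReal_mul (Real.rpow_nonneg ht0.le _), ← Real.rpow_add ht0,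
      neg_div, neg_add_cancel, Real.rpow_zero, ENNReal.ofReal_one, one_mul]
  calc (∫⁻ t in Ioi (1 : ℝ), g t) ^ 2
      ≤ (∫⁻ t in Ioi (1 : ℝ), ENNReal.ofReal (t ^ (-p / 2)) ^ 2) *
          ∫⁻ t in Ioi (1 : ℝ), (ENNReal.ofReal (t ^ (p / 2)) * g t) ^ 2 := by
        rw [hsplit]
        exact ENNReal.sq_lintegral_mul_le _ (by fun_prop) (by fun_prop)
    _ = ENNReal.ofReal (p - 1)⁻¹ * ∫⁻ t in Ioi (1 : ℝ), ENNReal.ofReal (t ^ p) * g t ^ 2 := by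
      rw [setLIntegral_congr_fun measurableSet_Ioi fun t ht => hsq ht _,
        setLIntegral_Ioi_one_ofReal_rpow (by linarith)]
      congr 1
      · ring_nf
      · refine setLIntegral_congr_fun measurableSet_Ioi fun t ht => ?_
        rw [mul_pow, hsq ht]
        ring_nf

section HaarScaling

variable {E : Type*} [NormedAddCommGroup E] [NormedSpace ℝ E] [MeasurableSpace E] [BorelSpace E]
  [FiniteDimensional ℝ E] (μ : Measure E) [μ.IsAddHaarMeasure]

theorem MeasureTheory.Measure.lintegral_comp_smul (f : E → ℝ≥0∞) {r : ℝ} (hr : r ≠ 0) :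
    ∫⁻ x, f (r • x) ∂μ = ENNReal.ofReal |(r ^ finrank ℝ E)⁻¹| * ∫⁻ x, f x ∂μ := by
  rw [← smul_eq_mul, ← lintegral_smul_measure, ← Measure.map_addHaar_smul μ hr,
    ← MeasurableEquiv.coe_smul₀ hr, lintegral_map_equiv, MeasurableEquiv.coe_smul₀]

theorem lintegral_setLIntegral_Ioi_one_rpow_mul_comp_smul {g : E → ℝ≥0∞} (hg : Measurable g)
    {p : ℝ} (hp : p < finrank ℝ E - 1) :
    ∫⁻ x, (∫⁻ t in Ioi (1 : ℝ), ENNReal.ofReal (t ^ p) * g (t • x)) ∂μ =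
      ENNReal.ofReal (finrank ℝ E - 1 - p)⁻¹ * ∫⁻ x, g x ∂μ := by
  have hm : Measurable
      (Function.uncurry fun (x : E) (t : ℝ) => ENNReal.ofReal (t ^ p) * g (t • x)) :=
    (measurable_snd.pow_const p).ennreal_ofReal.mul (hg.comp (measurable_snd.smul measurable_fst))
  rw [lintegral_lintegral_swap hm.aemeasurable]
  calc ∫⁻ t in Ioi (1 : ℝ), ∫⁻ x, ENNReal.ofReal (t ^ p) * g (t • x) ∂μ
      = ∫⁻ t in Ioi (1 : ℝ), ENNReal.ofReal (t ^ (p - finrank ℝ E)) * ∫⁻ x, g x ∂μ := by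
        refine setLIntegral_congr_fun measurableSet_Ioi fun t ht => ?_
        have ht0 : 0 < t := zero_lt_one.trans ht
        rw [lintegral_const_mul' _ _ ENNReal.ofReal_ne_top, μ.lintegral_comp_smul g ht0.ne',
          ← mul_assoc, ← ENNReal.ofReal_mul (Real.rpow_nonneg ht0.le _),
          abs_of_pos (by positivity), Real.rpow_sub ht0, Real.rpow_natCast, div_eq_mul_inv]
    _ = ENNReal.ofReal (finrank ℝ E - 1 - p)⁻¹ * ∫⁻ x, g x ∂μ := by
      rw [lintegral_mul_const _ (by fun_prop), setLIntegral_Ioi_one_ofReal_rpow (by linarith)]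
      ring_nf

end HaarScaling

namespace SchwartzMap

variable {E F : Type*} [NormedAddCommGroup E] [NormedSpace ℝ E] [NormedAddCommGroup F]
  [NormedSpace ℝ F]

theorem continuous_fderiv (u : 𝓢(E, F)) : Continuous (fderiv ℝ u) :=
  (u.smooth ⊤).continuous_fderiv (by simp)

theorem tendsto_apply_smul_atTop (u : 𝓢(E, F)) {x : E} (hx : x ≠ 0) :
    Tendsto (fun t : ℝ => u (t • x)) atTop (𝓝 0) := by
  obtain ⟨C, -, hC⟩ := u.decay 1 0
  have hx' : 0 < ‖x‖ := norm_pos_iff.2 hx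
  refine squeeze_zero_norm' (a := fun t => C / (t * ‖x‖)) ?_
    (tendsto_const_nhds.div_atTop (tendsto_id.atTop_mul_const hx'))
  filter_upwards [eventually_gt_atTop 0] with t ht
  have h := hC (t • x)
  rw [pow_one, norm_iteratedFDeriv_zero, norm_smul, Real.norm_of_nonneg ht.le] at h
  rw [le_div_iff₀ (by positivity)]
  linarith

theorem enorm_le_enorm_mul_setLIntegral_fderiv_smul [CompleteSpace F] (u : 𝓢(E, F)) {x : E}
    (hx : x ≠ 0) :
    ‖u x‖ₑ ≤ ‖x‖ₑ * ∫⁻ t in Ioi (1 : ℝ), ‖fderiv ℝ u (t • x)‖ₑ := by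
  have hray : Continuous fun t : ℝ => fderiv ℝ u (t • x) :=
    u.continuous_fderiv.comp (continuous_id.smul continuous_const)
  have hderiv (t : ℝ) : HasDerivAt (fun s : ℝ => u (s • x)) (fderiv ℝ u (t • x) x) t :=
    u.differentiableAt.hasFDerivAt.comp_hasDerivAt t
      (by simpa using (hasDerivAt_id t).smul_const x)
  calc ‖u x‖ₑ = ‖u ((1 : ℝ) • x)‖ₑ := by rw [one_smul]
    _ ≤ ∫⁻ t in Ioi (1 : ℝ), ‖fderiv ℝ u (t • x) x‖ₑ :=
      enorm_le_setLIntegral_Ioi_enorm_deriv (fun t _ => hderiv t)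
        (hray.clm_apply continuous_const).aestronglyMeasurable (u.tendsto_apply_smul_atTop hx)
    _ ≤ ∫⁻ t in Ioi (1 : ℝ), ‖fderiv ℝ u (t • x)‖ₑ * ‖x‖ₑ :=
      lintegral_mono fun t => ContinuousLinearMap.le_opENorm _ _
    _ = ‖x‖ₑ * ∫⁻ t in Ioi (1 : ℝ), ‖fderiv ℝ u (t • x)‖ₑ := by
      rw [lintegral_mul_const _ hray.measurable.enorm, mul_comm]

theorem sq_enorm_div_enorm_le [CompleteSpace F] (u : 𝓢(E, F)) {x : E} (hx : x ≠ 0) {p : ℝ}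
    (hp : 1 < p) :
    (‖u x‖ₑ / ‖x‖ₑ) ^ 2 ≤ ENNReal.ofReal (p - 1)⁻¹ *
      ∫⁻ t in Ioi (1 : ℝ), ENNReal.ofReal (t ^ p) * ‖fderiv ℝ u (t • x)‖ₑ ^ 2 := by
  have hray : Continuous fun t : ℝ => fderiv ℝ u (t • x) :=
    u.continuous_fderiv.comp (continuous_id.smul continuous_const)
  calc (‖u x‖ₑ / ‖x‖ₑ) ^ 2 ≤ (∫⁻ t in Ioi (1 : ℝ), ‖fderiv ℝ u (t • x)‖ₑ) ^ 2 := by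
        gcongr
        exact ENNReal.div_le_of_le_mul' (u.enorm_le_enorm_mul_setLIntegral_fderiv_smul hx)
    _ ≤ _ := sq_setLIntegral_Ioi_one_le hray.enorm.measurable.aemeasurable hp

variable [CompleteSpace F] [MeasurableSpace E] [BorelSpace E] [FiniteDimensional ℝ E]
  (μ : Measure E) [μ.IsAddHaarMeasure]

theorem lintegral_sq_enorm_div_enorm_le (hd : 2 < finrank ℝ E) (u : 𝓢(E, F)) :
    ∫⁻ x, (‖u x‖ₑ / ‖x‖ₑ) ^ 2 ∂μ ≤
      ENNReal.ofReal (2 / (finrank ℝ E - 2)) ^ 2 * ∫⁻ x, ‖fderiv ℝ u x‖ₑ ^ 2 ∂μ := by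
  have hd' : (2 : ℝ) < finrank ℝ E := by exact_mod_cast hd
  have : Nontrivial E := Module.nontrivial_of_finrank_pos (R := ℝ) (by omega)
  have hp₁ : ((finrank ℝ E : ℝ) / 2 - 1)⁻¹ = 2 / (finrank ℝ E - 2) := by
    field_simp
  have hp₂ : ((finrank ℝ E : ℝ) - 1 - finrank ℝ E / 2)⁻¹ = 2 / (finrank ℝ E - 2) := by
    field_simp
    ring
  calc ∫⁻ x, (‖u x‖ₑ / ‖x‖ₑ) ^ 2 ∂μ
      ≤ ∫⁻ x, ENNReal.ofReal ((finrank ℝ E : ℝ) / 2 - 1)⁻¹ * (∫⁻ t in Ioi (1 : ℝ),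
          ENNReal.ofReal (t ^ ((finrank ℝ E : ℝ) / 2)) * ‖fderiv ℝ u (t • x)‖ₑ ^ 2) ∂μ := by
        refine lintegral_mono_ae ((μ.ae_ne 0).mono fun x hx => ?_)
        exact u.sq_enorm_div_enorm_le hx (by linarith)
    _ = ENNReal.ofReal (2 / (finrank ℝ E - 2)) ^ 2 * ∫⁻ x, ‖fderiv ℝ u x‖ₑ ^ 2 ∂μ := by
        rw [lintegral_const_mul' _ _ ENNReal.ofReal_ne_top,
          lintegral_setLIntegral_Ioi_one_rpow_mul_comp_smul μ
            (u.continuous_fderiv.measurable.enorm.pow_const 2) (by linarith), hp₁, hp₂,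
          ← mul_assoc, ← pow_two]

theorem integral_sq_inv_norm_mul_norm_le (hd : 2 < finrank ℝ E) (u : 𝓢(E, F)) :
    ∫ x, (‖x‖⁻¹ * ‖u x‖) ^ 2 ∂μ ≤
      (2 / (finrank ℝ E - 2)) ^ 2 * ∫ x, ‖fderiv ℝ u x‖ ^ 2 ∂μ := by
  have hc : (0 : ℝ) ≤ 2 / (finrank ℝ E - 2) := by
    have : (2 : ℝ) < finrank ℝ E := by exact_mod_cast hd
    exact div_nonneg zero_le_two (by linarith)
  have hint : Integrable (fun x => ‖fderiv ℝ u x‖ ^ 2) μ := by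
    simpa only [fderivCLM_apply] using
      ((fderivCLM ℝ E F u).memLp 2 μ).integrable_norm_pow two_ne_zero
  have hK : ∫⁻ x, ‖fderiv ℝ u x‖ₑ ^ 2 ∂μ = ENNReal.ofReal (∫ x, ‖fderiv ℝ u x‖ ^ 2 ∂μ) := by
    rw [ofReal_integral_eq_lintegral_ofReal hint (ae_of_all _ fun x => by positivity)]
    simp_rw [ENNReal.ofReal_pow (norm_nonneg _), ofReal_norm]
  have hpt (x : E) : ENNReal.ofReal ((‖x‖⁻¹ * ‖u x‖) ^ 2) ≤ (‖u x‖ₑ / ‖x‖ₑ) ^ 2 := by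
    rcases eq_or_ne x 0 with rfl | hx
    · simp
    rw [ENNReal.ofReal_pow (by positivity), inv_mul_eq_div,
      ENNReal.ofReal_div_of_pos (norm_pos_iff.2 hx), ofReal_norm, ofReal_norm]
  calc ∫ x, (‖x‖⁻¹ * ‖u x‖) ^ 2 ∂μ
      = (∫⁻ x, ENNReal.ofReal ((‖x‖⁻¹ * ‖u x‖) ^ 2) ∂μ).toReal :=
        integral_eq_lintegral_of_nonneg_ae (ae_of_all _ fun x => by positivity)
          (by fun_prop)
    _ ≤ (ENNReal.ofReal (2 / (finrank ℝ E - 2)) ^ 2 *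
          ENNReal.ofReal (∫ x, ‖fderiv ℝ u x‖ ^ 2 ∂μ)).toReal := by
        refine ENNReal.toReal_mono (by finiteness) ?_
        rw [← hK]
        exact (lintegral_mono hpt).trans (lintegral_sq_enorm_div_enorm_le μ hd u)
    _ = (2 / (finrank ℝ E - 2)) ^ 2 * ∫ x, ‖fderiv ℝ u x‖ ^ 2 ∂μ := by
        rw [ENNReal.toReal_mul, ENNReal.toReal_pow, ENNReal.toReal_ofReal hc,
          ENNReal.toReal_ofReal (integral_nonneg fun x => by positivity)]

end SchwartzMap

/-- Hardy's inequality in ℝ³ (squared form):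
`‖ |x|⁻¹ u ‖_{L²}² ≤ 2² ‖∇u‖_{L²}²` for Schwartz functions `u`. -/
theorem stmt5 (u : SchwartzMap (EuclideanSpace ℝ (Fin 3)) ℂ) :
    ∫ x : EuclideanSpace ℝ (Fin 3), (‖x‖⁻¹ * ‖u x‖) ^ 2 ≤
      2 ^ 2 * ∫ x : EuclideanSpace ℝ (Fin 3), ‖fderiv ℝ u x‖ ^ 2 := by
  have h := u.integral_sq_inv_norm_mul_norm_le volume (by simp)
  norm_num at h ⊢
  exact h
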